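/- arXiv:2203.05176 — 4 statements merged into one kernel-verified Lean document; each statement's English description precedes it below -/
import Mathlib

section
/- Let γ_{ij} = ∑_{q=max(0, i+j+1-s)}^{min(i,j)} (-1)^{min(i,j)+1-q} α_{q, i+j+1-q} with α_{ij} = 1/(i! j!). Then for all nonnegative integers i, j with i + j ≤ s - 1, one has γ_{ij} = -1/(i! j! (i+j+1)). -/
/-!
With `n = i + j` and `m = min i j`, the range of summation is `0 ≤ q ≤ m` since `n < s`, and
`1 / (q! (n + 1 - q)!) = C(n + 1, q) / (n + 1)!`. The partial alternating sum
`∑_{q ≤ m} (-1)^q C(n + 1, q)` telescopes by Pascal's rule to `(-1)^m C(n, m)`, and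
`C(n, m) / (n + 1)! = 1 / (i! j! (n + 1))`.
-/

open Finset Nat

variable {K : Type*} [Field K]

theorem neg_one_zpow_natCast_add_one_sub (m q : ℕ) :
    (-1 : K) ^ ((m : ℤ) + 1 - q) = -(-1) ^ (m + q) := by
  rw [zpow_sub₀ (by norm_num), zpow_add_one₀ (by norm_num), zpow_natCast, zpow_natCast,
    div_eq_mul_inv, ← inv_pow, inv_neg_one, pow_add]
  ring

theorem sum_range_neg_one_pow_add_div_factorial_mul_factorial [CharZero K] (a b : ℕ) :
    ∑ q ∈ range (a + 1), (-1 : K) ^ (a + q) / ((q ! : K) * ((a + b + 1 - q) ! : K)) =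
      1 / ((a ! : K) * (b ! : K) * ((a : K) + b + 1)) := by
  have hfac (n : ℕ) : (n ! : K) ≠ 0 := Nat.cast_ne_zero.2 (factorial_ne_zero n)
  calc ∑ q ∈ range (a + 1), (-1 : K) ^ (a + q) / ((q ! : K) * ((a + b + 1 - q) ! : K))
      = (-1) ^ a * ((∑ q ∈ range (a + 1), (-1) ^ q * ((a + b + 1).choose q : ℤ) : ℤ) : K) /
          ((a + b + 1) ! : K) := by
        push_cast
        rw [mul_sum, sum_div]
        refine sum_congr rfl fun q hq => ?_
        rw [Nat.cast_choose K (by grind), pow_add]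
        field_simp [hfac]
    _ = ((-1) * (-1)) ^ a * ((a + b).choose a : K) / ((a + b + 1) ! : K) := by
        rw [Int.alternating_sum_range_choose_eq_choose, mul_pow]
        push_cast
        ring
    _ = 1 / ((a ! : K) * (b ! : K) * ((a : K) + b + 1)) := by
        rw [Nat.cast_choose K (by omega), Nat.factorial_succ, add_tsub_cancel_left]
        push_cast
        field_simp [hfac]
        ring

theorem gamma_coefficients (s : ℕ) (hs : 1 ≤ s) (i j : ℕ) (hij : i + j ≤ s - 1) :
    (∑ q ∈ Finset.Icc (i + j + 1 - s) (min i j),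
        ((-1 : ℝ) ^ ((min i j : ℤ) + 1 - (q : ℤ))) /
          ((Nat.factorial q : ℝ) * (Nat.factorial (i + j + 1 - q) : ℝ)))
    = -1 / ((Nat.factorial i : ℝ) * (Nat.factorial j : ℝ) * ((i : ℝ) + (j : ℝ) + 1)) := by
  rw [show i + j + 1 - s = 0 by omega, ← range_succ_eq_Icc_zero]
  simp only [← Nat.cast_min, neg_one_zpow_natCast_add_one_sub, neg_div, sum_neg_distrib]
  rcases le_total i j with h | h
  · rw [min_eq_left h, sum_range_neg_one_pow_add_div_factorial_mul_factorial]
  · rw [min_eq_right h, add_comm i j, sum_range_neg_one_pow_add_div_factorial_mul_factorial]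
    ring
end

section
/- Let δ_{ij} = ∑_{q=max(0, i+j+1-s)}^{min(i,j)} (-1)^{min(i,j)-q} α_{q, i+j+1-q} (i+j+1) with α_{ij} = 1/(i! j!). Then for all nonnegative integers i, j with i + j ≤ s - 1, one has δ_{ij} = 1/(i! j!). -/
/-!
Since `i + j + 1 ≤ s`, the sum starts at `q = 0`. Put `n = i + j` and `m = min i j`. Then
`(n + 1) / (q! (n + 1 - q)!) = C(n + 1, q) / n!`, and by Pascal's rule the partial alternating sum
`∑_{q ≤ m} (-1)^q C(n + 1, q)` telescopes to `(-1)^m C(n, m)`. Hence `δ_{ij} = C(n, m) / n!`, which is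
`1 / (m! (n - m)!) = 1 / (i! j!)`.
-/

open Finset Nat

section

variable {K : Type*} [Field K] [CharZero K]

lemma succ_div_factorial_mul_factorial {n q : ℕ} (hq : q ≤ n + 1) :
    ((n : K) + 1) / (q ! * (n + 1 - q)!) = (n + 1).choose q / n ! := by
  have : (n ! : K) ≠ 0 := Nat.cast_ne_zero.2 (factorial_ne_zero n)
  rw [cast_choose K hq, factorial_succ]
  push_cast
  field_simp

lemma alternating_sum_succ_choose (n m : ℕ) :
    ∑ q ∈ range (m + 1), (-1 : K) ^ q * (n + 1).choose q = (-1) ^ m * n.choose m := by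
  exact_mod_cast congrArg (Int.cast : ℤ → K) Int.alternating_sum_range_choose_eq_choose

lemma alternating_sum_succ_div_factorial_mul_factorial {n m : ℕ} (hmn : m ≤ n) :
    ∑ q ∈ range (m + 1), (-1 : K) ^ q * (((n : K) + 1) / (q ! * (n + 1 - q)!)) =
      (-1) ^ m / (m ! * (n - m)!) := by
  have hterm : ∀ q ∈ range (m + 1), (-1 : K) ^ q * (((n : K) + 1) / (q ! * (n + 1 - q)!)) =
      (-1) ^ q * (n + 1).choose q / n ! := fun q hq => by
    rw [succ_div_factorial_mul_factorial (by grind), mul_div_assoc]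
  rw [sum_congr rfl hterm, ← sum_div, alternating_sum_succ_choose, mul_div_assoc,
    cast_choose K hmn, div_div_cancel_left' (by simp [factorial_ne_zero]), div_eq_mul_inv]

end

lemma neg_one_zpow_natCast_sub {K : Type*} [DivisionRing K] (a b : ℕ) :
    (-1 : K) ^ ((a : ℤ) - b) = (-1) ^ a * (-1) ^ b := by
  rw [zpow_sub₀ (by norm_num), zpow_natCast, zpow_natCast, div_eq_mul_inv, ← inv_pow, inv_neg,
    inv_one]

lemma factorial_min_mul_factorial_sub (i j : ℕ) :
    (min i j)! * (i + j - min i j)! = i ! * j ! := by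
  rcases le_total i j with h | h
  · rw [min_eq_left h, Nat.add_sub_cancel_left]
  · rw [min_eq_right h, Nat.add_sub_cancel, Nat.mul_comm]

theorem delta_coefficients (s : ℕ) (hs : 1 ≤ s) (i j : ℕ) (hij : i + j ≤ s - 1) :
    (∑ q ∈ Finset.Icc (i + j + 1 - s) (min i j),
        ((-1 : ℝ) ^ ((min i j : ℤ) - (q : ℤ))) /
          ((Nat.factorial q : ℝ) * (Nat.factorial (i + j + 1 - q) : ℝ)) * ((i : ℝ) + (j : ℝ) + 1))
    = 1 / ((Nat.factorial i : ℝ) * (Nat.factorial j : ℝ)) := by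
  have hlow : i + j + 1 - s = 0 := by omega
  have hcast : (i : ℝ) + j + 1 = ((i + j : ℕ) : ℝ) + 1 := by push_cast; rfl
  have hsign : (-1 : ℝ) ^ min i j * (-1) ^ min i j = 1 := by
    rw [← pow_add, Even.neg_one_pow ⟨_, rfl⟩]
  simp_rw [hlow, ← range_succ_eq_Icc_zero, ← Nat.cast_min, neg_one_zpow_natCast_sub, hcast]
  have hterm : ∀ q ∈ range (min i j + 1),
      (-1 : ℝ) ^ min i j * (-1) ^ q / (q ! * (i + j + 1 - q)!) * ((i + j : ℕ) + 1) =
        (-1) ^ min i j * ((-1) ^ q * (((i + j : ℕ) + 1) / (q ! * (i + j + 1 - q)!))) :=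
    fun q _ => by ring
  rw [sum_congr rfl hterm, ← mul_sum, alternating_sum_succ_div_factorial_mul_factorial (by omega),
    ← mul_div_assoc, hsign, ← cast_mul, factorial_min_mul_factorial_sub, cast_mul]
end

section
/- Let V be a finite-dimensional real inner product space, and let M₀, M₁, A : V → V be linear maps with M₀ and M₁ self-adjoint, and suppose M(t) := M₀ - t M₁ is positive definite for all t ∈ [0,1]. Assume D := -(Aᵀ + A + M₁) is positive semidefinite. If u : [0,1] → V is differentiable and satisfies d/dt (M(t) u(t)) = A u(t), then d/dt ⟨M(t) u(t), u(t)⟩ = -⟨D u(t), u(t)⟩ ≤ 0; in particular t ↦ ⟨M(t) u(t), u(t)⟩ is nonincreasing. -/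
/-!
Since `M(t) = M₀ - t M₁`, the equation `(M u)' = A u` says `M(t) u' = A u + M₁ u`. The product
rule gives `d/dt ⟪M u, u⟫ = ⟪M u, u'⟫ + ⟪A u, u⟫`, and symmetry of `M(t)` turns the first term
into `⟪u, A u + M₁ u⟫`, so the derivative is `⟪(Aᵀ + A + M₁) u, u⟫ = -⟪D u, u⟫ ≤ 0`.
-/

open scoped RealInnerProductSpace

section

variable {V : Type*} [NormedAddCommGroup V] [InnerProductSpace ℝ V] [FiniteDimensional ℝ V]
  {u : ℝ → V} {u' w : V} {t : ℝ}

theorem HasDerivAt.sub_smul_apply (hu : HasDerivAt u u' t) (M₀ M₁ : V →ₗ[ℝ] V) :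
    HasDerivAt (fun τ : ℝ => (M₀ - τ • M₁) (u τ)) ((M₀ - t • M₁) u' - M₁ (u t)) t := by
  have hM₀ := (LinearMap.toContinuousLinearMap M₀).hasFDerivAt.comp_hasDerivAt t hu
  have hM₁ := (LinearMap.toContinuousLinearMap M₁).hasFDerivAt.comp_hasDerivAt t hu
  convert hM₀.sub ((hasDerivAt_id t).smul hM₁) using 1
  · ext τ
    simp
  · simp only [LinearMap.sub_apply, LinearMap.smul_apply, LinearMap.coe_toContinuousLinearMap',
      id, one_smul]
    abel

theorem sub_smul_apply_deriv_eq {M₀ M₁ : V →ₗ[ℝ] V} (hu : HasDerivAt u u' t)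
    (hode : HasDerivAt (fun τ : ℝ => (M₀ - τ • M₁) (u τ)) w t) :
    (M₀ - t • M₁) u' = w + M₁ (u t) := by
  rw [hode.unique (hu.sub_smul_apply M₀ M₁), sub_add_cancel]

theorem LinearMap.inner_adjoint_add_add_apply_self (A B : V →ₗ[ℝ] V) (v : V) :
    ⟪(LinearMap.adjoint A + A + B) v, v⟫ = ⟪A v, v⟫ + ⟪v, A v + B v⟫ := by
  simp only [LinearMap.add_apply, inner_add_left, inner_add_right, LinearMap.adjoint_inner_left,
    real_inner_comm (A v) v, real_inner_comm (B v) v, add_assoc]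

end

theorem semidiscrete_energy_nonincreasing_general
    {V : Type*} [NormedAddCommGroup V] [InnerProductSpace ℝ V] [FiniteDimensional ℝ V]
    (M₀ M₁ A : V →ₗ[ℝ] V)
    (hM₀ : LinearMap.IsSymmetric M₀) (hM₁ : LinearMap.IsSymmetric M₁)
    (hD : ∀ v : V, 0 ≤ ⟪(-(LinearMap.adjoint A + A + M₁)) v, v⟫)
    (u u' : ℝ → V)
    (hu : ∀ t ∈ Set.Icc (0 : ℝ) 1, HasDerivAt u (u' t) t)
    (hode : ∀ t ∈ Set.Icc (0 : ℝ) 1,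
      HasDerivAt (fun τ : ℝ => (M₀ - τ • M₁) (u τ)) (A (u t)) t) :
    ∀ t ∈ Set.Icc (0 : ℝ) 1,
      HasDerivAt (fun τ : ℝ => ⟪(M₀ - τ • M₁) (u τ), u τ⟫)
        (-⟪(-(LinearMap.adjoint A + A + M₁)) (u t), u t⟫) t
      ∧ -⟪(-(LinearMap.adjoint A + A + M₁)) (u t), u t⟫ ≤ 0 := by
  intro t ht
  have hMu' := sub_smul_apply_deriv_eq (hu t ht) (hode t ht)
  have hMsymm : (M₀ - t • M₁).IsSymmetric := hM₀.sub (hM₁.smul (conj_trivial t))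
  refine ⟨?_, neg_nonpos.mpr (hD (u t))⟩
  have henergy := (hode t ht).inner ℝ (hu t ht)
  rw [hMsymm, hMu', add_comm] at henergy
  rwa [LinearMap.neg_apply, inner_neg_left, neg_neg, LinearMap.inner_adjoint_add_add_apply_self]

theorem semidiscrete_energy_nonincreasing
    {V : Type*} [NormedAddCommGroup V] [InnerProductSpace ℝ V] [FiniteDimensional ℝ V]
    (M₀ M₁ A : V →ₗ[ℝ] V)
    (hM₀ : LinearMap.IsSymmetric M₀) (hM₁ : LinearMap.IsSymmetric M₁)
    (hMpd : ∀ t ∈ Set.Icc (0 : ℝ) 1, ∀ v : V, v ≠ 0 → 0 < ⟪(M₀ - t • M₁) v, v⟫)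
    (hD : ∀ v : V, 0 ≤ ⟪(-(LinearMap.adjoint A + A + M₁)) v, v⟫)
    (u u' : ℝ → V)
    (hu : ∀ t ∈ Set.Icc (0 : ℝ) 1, HasDerivAt u (u' t) t)
    (hode : ∀ t ∈ Set.Icc (0 : ℝ) 1,
      HasDerivAt (fun τ : ℝ => (M₀ - τ • M₁) (u τ)) (A (u t)) t) :
    ∀ t ∈ Set.Icc (0 : ℝ) 1,
      HasDerivAt (fun τ : ℝ => ⟪(M₀ - τ • M₁) (u τ), u τ⟫)
        (-⟪(-(LinearMap.adjoint A + A + M₁)) (u t), u t⟫) t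
      ∧ -⟪(-(LinearMap.adjoint A + A + M₁)) (u t), u t⟫ ≤ 0 :=
  semidiscrete_energy_nonincreasing_general M₀ M₁ A hM₀ hM₁ hD u u' hu hode
end

section
/- Let V be a finite-dimensional real inner product space, M₀, M₁, A : V → V linear with M₀, M₁ self-adjoint and M₀ positive definite, D := -(Aᵀ + A + M₁), τ > 0, X₀ = I, X_i = τ M₀^{-1}(A + i M₁) X_{i-1}. Then for any v ∈ V and integers 0 ≤ i, j with j > i + 1: ⟨X_i v, X_j v⟩_{M₀} = -⟨X_{i+1} v, X_{j-1} v⟩_{M₀} - ⟨X_i v, X_{j-1} v⟩_{τD} + (i+j) ⟨X_i v, X_{j-1} v⟩_{τM₁}. -/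
open scoped RealInnerProductSpace

theorem discrete_ibp_offdiagonal
    {V : Type*} [NormedAddCommGroup V] [InnerProductSpace ℝ V] [FiniteDimensional ℝ V]
    (M₀ M₁ A : V →ₗ[ℝ] V)
    (hM₀ : LinearMap.IsSymmetric M₀) (hM₁ : LinearMap.IsSymmetric M₁)
    (hM₀pd : ∀ v : V, v ≠ 0 → 0 < ⟪M₀ v, v⟫)
    (N : V →ₗ[ℝ] V) (hN₁ : N ∘ₗ M₀ = LinearMap.id) (hN₂ : M₀ ∘ₗ N = LinearMap.id)
    (D : V →ₗ[ℝ] V) (hD : D = -(LinearMap.adjoint A + A + M₁))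
    (τ : ℝ) (hτ : 0 < τ)
    (X : ℕ → V →ₗ[ℝ] V) (hX0 : X 0 = LinearMap.id)
    (hX : ∀ i : ℕ, X (i + 1) = τ • (N ∘ₗ (A + ((i : ℝ) + 1) • M₁) ∘ₗ X i)) :
    ∀ (v : V) (i j : ℕ), i + 1 < j →
      ⟪M₀ (X i v), X j v⟫
        = -⟪M₀ (X (i + 1) v), X (j - 1) v⟫
          - τ * ⟪D (X i v), X (j - 1) v⟫
          + ((i : ℝ) + (j : ℝ)) * (τ * ⟪M₁ (X i v), X (j - 1) v⟫) := by
  intro v i j hij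
  obtain ⟨k, rfl⟩ : ∃ k, j = k + 1 := ⟨j - 1, by omega⟩
  have hMN' : ∀ x y : V, ⟪M₀ x, N y⟫ = ⟪x, y⟫ := by
    intro x y
    rw [hM₀, ← LinearMap.comp_apply, hN₂, LinearMap.id_apply]
  have hMN : ∀ x y : V, ⟪M₀ (N x), y⟫ = ⟪x, y⟫ := by
    intro x y
    rw [← LinearMap.comp_apply, hN₂, LinearMap.id_apply]
  simp only [Nat.add_sub_cancel, hX, hD, LinearMap.smul_apply, LinearMap.comp_apply,
    LinearMap.add_apply, LinearMap.neg_apply, map_smul, map_add,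
    inner_smul_right, inner_smul_left, inner_add_right, inner_add_left,
    inner_neg_left, hMN, hMN', LinearMap.adjoint_inner_left, smul_eq_mul,
    Nat.cast_add, Nat.cast_one, conj_trivial, hM₁ (X i v) (X k v)]
  ring
end
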